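/- Validity under ill-formed substitution is sound at the propositional level: define a three-valued-free semantics where each atom containing the context variable Γ evaluates to False (since the substituted context is ill-formed) and each atom not containing Γ evaluates to an arbitrary truth value. Then: (1) if the syntactic judgement Γ ⊢⁻ F ('F invalid under ill-formed substitution') is derivable by the rules of Figure 7, F evaluates to False under every such valuation; and (2) if Γ ⊢⁺ F ('F valid under ill-formed substitution') is derivable, F evaluates to True under every such valuation. -/
import Mathlib


/-- Propositional formulas: atoms whose context mentions `Γ`, other atoms
indexed by `ι`, and the propositional connectives. -/
inductive PFm (ι : Type*) : Type _
  | atomGamma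
  | atomOther (i : ι)
  | top
  | bot
  | imp (F1 F2 : PFm ι)
  | conj (F1 F2 : PFm ι)
  | disj (F1 F2 : PFm ι)

universe u

mutual
/-- `Γ ⊢⁻ F`: `F` is invalid under an ill-formed substitution for `Γ`. -/
inductive NegJ {ι : Type u} : PFm ι → Prop
  | bot : NegJ .bot
  | atomGamma : NegJ .atomGamma
  | imp {F1 F2 : PFm ι} : PosJ F1 → NegJ F2 → NegJ (.imp F1 F2)
  | disj {F1 F2 : PFm ι} : NegJ F1 → NegJ F2 → NegJ (.disj F1 F2)
  | conjL {F1 F2 : PFm ι} : NegJ F1 → NegJ (.conj F1 F2)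
  | conjR {F1 F2 : PFm ι} : NegJ F2 → NegJ (.conj F1 F2)

/-- `Γ ⊢⁺ F`: `F` is valid under an ill-formed substitution for `Γ`. -/
inductive PosJ {ι : Type u} : PFm ι → Prop
  | top : PosJ .top
  | disjL {F1 F2 : PFm ι} : PosJ F1 → PosJ (.disj F1 F2)
  | disjR {F1 F2 : PFm ι} : PosJ F2 → PosJ (.disj F1 F2)
  | conj {F1 F2 : PFm ι} : PosJ F1 → PosJ F2 → PosJ (.conj F1 F2)
  | impL {F1 F2 : PFm ι} : NegJ F1 → PosJ (.imp F1 F2)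
  | impR {F1 F2 : PFm ι} : PosJ F2 → PosJ (.imp F1 F2)
end

/-- Evaluation of a formula under a valuation `v` of the other atoms, with
atoms mentioning `Γ` evaluating to `False`. -/
def eval {ι : Type*} (v : ι → Prop) : PFm ι → Prop
  | .atomGamma => False
  | .atomOther i => v i
  | .top => True
  | .bot => False
  | .imp F1 F2 => eval v F1 → eval v F2
  | .conj F1 F2 => eval v F1 ∧ eval v F2
  | .disj F1 F2 => eval v F1 ∨ eval v F2

theorem illformed_validity_sound {ι : Type*} (F : PFm ι) :
    (NegJ F → ∀ v : ι → Prop, ¬ eval v F) ∧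
      (PosJ F → ∀ v : ι → Prop, eval v F) := by
  induction F with
  | atomGamma => exact ⟨fun _ _ => id, (fun h => nomatch h)⟩
  | atomOther i => exact ⟨(fun h => nomatch h), (fun h => nomatch h)⟩
  | top => exact ⟨(fun h => nomatch h), fun _ _ => trivial⟩
  | bot => exact ⟨fun _ _ => id, (fun h => nomatch h)⟩
  | imp F1 F2 ih1 ih2 =>
    refine ⟨fun h v he => ?_, fun h v => ?_⟩
    · cases h with
      | imp hp hn => exact ih2.1 hn v (he (ih1.2 hp v))
    · cases h with
      | impL hn => exact fun he => absurd he (ih1.1 hn v)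
      | impR hp => exact fun _ => ih2.2 hp v
  | conj F1 F2 ih1 ih2 =>
    refine ⟨fun h v he => ?_, fun h v => ?_⟩
    · cases h with
      | conjL hn => exact ih1.1 hn v he.1
      | conjR hn => exact ih2.1 hn v he.2
    · cases h with
      | conj h1 h2 => exact ⟨ih1.2 h1 v, ih2.2 h2 v⟩
  | disj F1 F2 ih1 ih2 =>
    refine ⟨fun h v he => ?_, fun h v => ?_⟩
    · cases h with
      | disj h1 h2 => rcases he with he | he; exacts [ih1.1 h1 v he, ih2.1 h2 v he]
    · cases h with
      | disjL hp => exact Or.inl (ih1.2 hp v)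
      | disjR hp => exact Or.inr (ih2.2 hp v)
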